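/- arXiv:1206.4216 — 2 statements merged into one kernel-verified Lean document; each statement's English description precedes it below -/
import Mathlib

section
/- Let T be a finite tree whose edges are colored with n colors such that (a) for each color, the edges of that color form a path in T, and (b) every vertex of degree 3 has two incident edges of the same color, and every vertex of degree 4 has its four incident edges in two monochromatic pairs. If T has k₁ leaves among a distinguished set and uses exactly n₁ colors, then T has at least n₁ + k₁ - 2 edges. -/
/-!
Call `c` an end colour at `v` if exactly one edge of colour `c` meets `v`. Each colour in use
forms a path, whose two ends give `c` at least two such vertices, so twice the number of colours
is at most the total number of end colours. Locally, the conditions at vertices of degree 3 and 4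
give `#(end colours at v) + deg v + 2·[deg v = 1] ≤ 4` at every vertex. Summing, with
`∑ deg = 2|E|` and `|V| = |E| + 1`, yields `2 n₁ + 2 k₁ + 2|E| ≤ 4 (|E| + 1)`.
-/

open Finset

namespace SimpleGraph

variable {V : Type*} {G : SimpleGraph V}

namespace Walk

lemma IsPath.card_filter_mem_edges_start [DecidableEq V] {u w : V} {p : G.Walk u w}
    (hp : p.IsPath) (hnil : ¬p.Nil) : #{e ∈ p.edges.toFinset | u ∈ e} = 1 := by
  cases p with
  | nil => exact absurd nil_nil hnil
  | @cons _ b _ h q =>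
    have hu : u ∉ q.support := ((cons_isPath_iff h q).mp hp).2
    have hq : {e ∈ q.edges.toFinset | u ∈ e} = ∅ := filter_eq_empty_iff.mpr fun e he hue =>
      hu (mem_support_of_mem_edges (List.mem_toFinset.mp he) hue)
    rw [edges_cons, List.toFinset_cons, filter_insert, if_pos (Sym2.mem_mk_left u b), hq]
    rfl

lemma IsPath.card_filter_mem_edges_end [DecidableEq V] {u w : V} {p : G.Walk u w}
    (hp : p.IsPath) (hnil : ¬p.Nil) : #{e ∈ p.edges.toFinset | w ∈ e} = 1 := by
  simpa only [edges_reverse, List.toFinset_reverse] using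
    hp.reverse.card_filter_mem_edges_start (nil_reverse.not.mpr hnil)

lemma IsPath.two_le_card_filter_card_edges_eq_one [Fintype V] [DecidableEq V] {u w : V}
    {p : G.Walk u w} (hp : p.IsPath) (hnil : ¬p.Nil) :
    2 ≤ #{v | #{e ∈ p.edges.toFinset | v ∈ e} = 1} := by
  have huw : u ≠ w := by
    rintro rfl
    exact hnil (isPath_iff_nil.mp hp)
  calc 2 = #{u, w} := (card_pair huw).symm
    _ ≤ _ := card_le_card <| insert_subset_iff.mpr
      ⟨mem_filter.mpr ⟨mem_univ u, hp.card_filter_mem_edges_start hnil⟩,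
        singleton_subset_iff.mpr (mem_filter.mpr ⟨mem_univ w, hp.card_filter_mem_edges_end hnil⟩)⟩

end Walk

section Coloring

variable [Fintype V] [DecidableEq V] [DecidableRel G.Adj] {κ : Type*} [DecidableEq κ]
  (t : Sym2 V → κ)

variable (G) in
def colorDegree (v : V) (c : κ) : ℕ := #{e ∈ G.incidenceFinset v | t e = c}

lemma two_le_colorDegree {v : V} {e₁ e₂ : Sym2 V} (hne : e₁ ≠ e₂) (h₁ : e₁ ∈ G.incidenceSet v)
    (h₂ : e₂ ∈ G.incidenceSet v) (ht : t e₁ = t e₂) : 2 ≤ G.colorDegree t v (t e₁) := by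
  calc 2 = #({e₁, e₂} : Finset (Sym2 V)) := (card_pair hne).symm
    _ ≤ #{e ∈ G.incidenceFinset v | t e = t e₁} := card_le_card <| insert_subset_iff.mpr
      ⟨mem_filter.mpr ⟨(mem_incidenceFinset _ _ _).mpr h₁, rfl⟩,
        singleton_subset_iff.mpr (mem_filter.mpr ⟨(mem_incidenceFinset _ _ _).mpr h₂, ht.symm⟩)⟩

lemma two_le_card_colorDegree_eq_one_of_isPath {c : κ} {u w : V} {p : G.Walk u w}
    (hp : p.IsPath) (hnil : ¬p.Nil) (hc : ∀ e, e ∈ G.edgeSet ∧ t e = c ↔ e ∈ p.edges) :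
    2 ≤ #{v | G.colorDegree t v c = 1} := by
  have hdeg : ∀ v, G.colorDegree t v c = #{e ∈ p.edges.toFinset | v ∈ e} := fun v => by
    unfold colorDegree
    congr 1
    ext e
    simp only [mem_filter, mem_incidenceFinset, incidenceSet, Set.mem_ofPred_eq,
      List.mem_toFinset, ← hc]
    tauto
  simpa only [hdeg] using hp.two_le_card_filter_card_edges_eq_one hnil

variable [Fintype κ]

variable (G) in
def endColors (v : V) : Finset κ := {c | G.colorDegree t v c = 1}

lemma sum_colorDegree (v : V) : ∑ c, G.colorDegree t v c = G.degree v := by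
  rw [← card_incidenceFinset_eq_degree]
  exact (card_eq_sum_card_fiberwise fun e _ => mem_univ (t e)).symm

lemma card_endColors_add_two_mul_card_le_degree (v : V) {s : Finset κ}
    (hs : ∀ c ∈ s, 2 ≤ G.colorDegree t v c) : #(G.endColors t v) + 2 * #s ≤ G.degree v := by
  have hends : #(G.endColors t v) = ∑ c ∈ G.endColors t v, G.colorDegree t v c := by
    rw [card_eq_sum_ones]
    exact sum_congr rfl fun c hc => ((mem_filter.mp hc).2).symm
  have hsub : G.endColors t v ⊆ univ \ s := fun c hc =>
    mem_sdiff.mpr ⟨mem_univ c, fun hcs => by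
      have := hs c hcs
      have := (mem_filter.mp hc).2
      omega⟩
  calc #(G.endColors t v) + 2 * #s
      ≤ ∑ c ∈ univ \ s, G.colorDegree t v c + ∑ c ∈ s, G.colorDegree t v c := by
        rw [hends, mul_comm, ← smul_eq_mul]
        exact add_le_add (sum_le_sum_of_subset hsub) (card_nsmul_le_sum s _ 2 hs)
    _ = G.degree v := by rw [sum_sdiff (subset_univ s), sum_colorDegree]

lemma card_endColors_add_degree_le_four (v : V) (hdeg : G.degree v ≤ 4)
    (h3 : G.degree v = 3 → ∃ c, 2 ≤ G.colorDegree t v c)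
    (h4 : G.degree v = 4 → ∃ c₁ c₂, c₁ ≠ c₂ ∧ G.colorDegree t v c₁ = 2 ∧
      G.colorDegree t v c₂ = 2) :
    #(G.endColors t v) + G.degree v + 2 * (if G.degree v = 1 then 1 else 0) ≤ 4 := by
  by_cases hv3 : G.degree v = 3
  · obtain ⟨c, hc⟩ := h3 hv3
    have := G.card_endColors_add_two_mul_card_le_degree t v (s := {c}) (by simpa using hc)
    rw [card_singleton] at this
    rw [if_neg (by omega)]
    omega
  by_cases hv4 : G.degree v = 4
  · obtain ⟨c₁, c₂, hne, hc₁, hc₂⟩ := h4 hv4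
    have := G.card_endColors_add_two_mul_card_le_degree t v (s := {c₁, c₂})
      (by simp [hc₁, hc₂])
    rw [card_pair hne] at this
    rw [if_neg (by omega)]
    omega
  have := G.card_endColors_add_two_mul_card_le_degree t v (s := ∅) (by simp)
  split_ifs <;> omega

lemma two_mul_card_image_le_sum_card_endColors
    (hpath : ∀ c, (∃ e ∈ G.edgeSet, t e = c) → ∃ (u w : V) (p : G.Walk u w), p.IsPath ∧
      ∀ e, e ∈ G.edgeSet ∧ t e = c ↔ e ∈ p.edges) :
    2 * #(G.edgeFinset.image t) ≤ ∑ v, #(G.endColors t v) := by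
  have hcolor : ∀ c ∈ G.edgeFinset.image t, 2 ≤ #{v | G.colorDegree t v c = 1} := by
    intro c hc
    obtain ⟨e, he, rfl⟩ := mem_image.mp hc
    obtain ⟨u, w, p, hp, hchar⟩ := hpath (t e) ⟨e, mem_edgeFinset.mp he, rfl⟩
    have hnil : ¬p.Nil := by
      rw [← Walk.edges_eq_nil]
      exact List.ne_nil_of_mem ((hchar e).mp ⟨mem_edgeFinset.mp he, rfl⟩)
    exact two_le_card_colorDegree_eq_one_of_isPath t hp hnil hchar
  calc 2 * #(G.edgeFinset.image t)
      ≤ ∑ c ∈ G.edgeFinset.image t, #{v | G.colorDegree t v c = 1} := by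
        rw [mul_comm, ← smul_eq_mul]
        exact card_nsmul_le_sum _ _ 2 hcolor
    _ ≤ ∑ c, #{v | G.colorDegree t v c = 1} := sum_le_sum_of_subset (subset_univ _)
    _ = ∑ v, #(G.endColors t v) := by
        simp only [endColors, card_filter]
        exact sum_comm

end Coloring

end SimpleGraph

open SimpleGraph

/-- Counting fact for colored trees: let `T` be a finite tree whose edges are
colored with colors in `Fin n` such that (a) for every color in use, the edges
of that color form a path, and (b) every vertex of degree 3 has two incident
edges of the same color, and every vertex of degree 4 has its four incident
edges in two monochromatic pairs (of distinct colors). If `T` has `k₁` leaves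
and uses exactly `n₁` colors, then `T` has at least `n₁ + k₁ - 2` edges. -/
theorem stmt_7 {V : Type*} [Fintype V] [DecidableEq V] (G : SimpleGraph V)
    [DecidableRel G.Adj] (hT : G.IsTree) (n : ℕ) (t : Sym2 V → Fin n)
    (hdeg4 : ∀ v, G.degree v ≤ 4)
    (hpath : ∀ c : Fin n, (∃ e ∈ G.edgeSet, t e = c) →
      ∃ (u v : V) (p : G.Walk u v), p.IsPath ∧
        ∀ e : Sym2 V, (e ∈ G.edgeSet ∧ t e = c) ↔ e ∈ p.edges)
    (hdeg3 : ∀ v, G.degree v = 3 →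
      ∃ e₁ e₂ : Sym2 V, e₁ ≠ e₂ ∧ e₁ ∈ G.incidenceSet v ∧
        e₂ ∈ G.incidenceSet v ∧ t e₁ = t e₂)
    (hdeg4' : ∀ v, G.degree v = 4 →
      ∃ c₁ c₂ : Fin n, c₁ ≠ c₂ ∧
        ((G.incidenceFinset v).filter fun e => t e = c₁).card = 2 ∧
        ((G.incidenceFinset v).filter fun e => t e = c₂).card = 2) :
    (G.edgeFinset.image t).card + (Finset.univ.filter fun v => G.degree v = 1).card
      ≤ G.edgeFinset.card + 2 := by
  have hcolors := G.two_mul_card_image_le_sum_card_endColors t hpath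
  have hlocal : ∀ v ∈ univ,
      #(G.endColors t v) + G.degree v + 2 * (if G.degree v = 1 then 1 else 0) ≤ 4 := by
    intro v _
    refine G.card_endColors_add_degree_le_four t v (hdeg4 v) (fun h3 => ?_) (hdeg4' v)
    obtain ⟨e₁, _, hne, h₁, h₂, ht⟩ := hdeg3 v h3
    exact ⟨t e₁, G.two_le_colorDegree t hne h₁ h₂ ht⟩
  have hsum := sum_le_sum hlocal
  rw [sum_add_distrib, sum_add_distrib, ← mul_sum, ← card_filter, sum_degrees_eq_twice_card_edges,
    sum_const, card_univ, ← hT.card_edgeFinset, smul_eq_mul] at hsum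
  omega
end

section
/- Let A₁, A₂, A₃ be finite subsets of ℤ^d (d ≥ 5) all contained in a ball B(0, cR), and suppose g(y,z) ≥ c₀ R^{2-d} for all y, z ∈ B(0, cR), where g is the Green's function of simple random walk. Then for every x ∈ A₃, the probability that a simple random walk started at x hits A₁ and afterwards hits A₂ satisfies P_x[H_{A₁} ≤ H_{A₂} ∘ θ < ∞] ≥ c₀² R^{2(2-d)} cap(A₁) cap(A₂). -/
/-- The `l¹` (graph) distance on `ℤ^d`. -/
def latZ {d : ℕ} (x y : Fin d → ℤ) : ℤ := ∑ i, |x i - y i|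

/-- A finite path in `ℤ^d` is good if all its steps are nearest-neighbor. -/
def goodPath {d N : ℕ} (g : Fin (N + 1) → Fin d → ℤ) : Prop :=
  ∀ i : Fin N, latZ (g i.castSucc) (g i.succ) = 1

open Classical in
/-- Probability that the first `N` steps of simple random walk started at `x`
form a path satisfying `E`: each nearest-neighbor path of length `N` has
probability `(2d)^{-N}`. -/
noncomputable def pathProb (d : ℕ) (x : Fin d → ℤ) (N : ℕ)
    (E : (Fin (N + 1) → Fin d → ℤ) → Prop) : ℝ :=
  ∑' f : Fin N → Fin d → ℤ,
    if goodPath (Fin.cons x f) ∧ E (Fin.cons x f) then ((2 * d : ℝ))⁻¹ ^ N else 0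

/-- Probability of a monotone event for simple random walk started at `x`,
as the supremum over time horizons `N` of the finite-horizon probabilities. -/
noncomputable def eventProb (d : ℕ) (x : Fin d → ℤ)
    (E : ∀ N : ℕ, (Fin (N + 1) → Fin d → ℤ) → Prop) : ℝ :=
  ⨆ N : ℕ, pathProb d x N (E N)

/-- `P_x[H_A < ∞]`: probability that SRW from `x` ever enters `A`. -/
noncomputable def hitProb (d : ℕ) (A : Set (Fin d → ℤ)) (x : Fin d → ℤ) : ℝ :=
  eventProb d x fun _ g => ∃ i, g i ∈ A

/-- `P_x[H̃_A < ∞]`: probability that SRW from `x` enters `A` at some time `≥ 1`. -/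
noncomputable def returnProb (d : ℕ) (A : Set (Fin d → ℤ)) (x : Fin d → ℤ) : ℝ :=
  eventProb d x fun _ g => ∃ i, i ≠ 0 ∧ g i ∈ A

open Classical in
/-- The equilibrium measure `e_A(x) = P_x[H̃_A = ∞] 1_{x ∈ A}`. -/
noncomputable def eqMeasure (d : ℕ) (A : Set (Fin d → ℤ)) (x : Fin d → ℤ) : ℝ :=
  if x ∈ A then 1 - returnProb d A x else 0

/-- The capacity `cap(A) = ∑_{z ∈ A} e_A(z)` of a finite set. -/
noncomputable def capacity (d : ℕ) (A : Finset (Fin d → ℤ)) : ℝ :=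
  ∑ z ∈ A, eqMeasure d (↑A) z

/-- `P_x[X_n = y]`: the `n`-step transition probability. -/
noncomputable def heatKernel (d n : ℕ) (x y : Fin d → ℤ) : ℝ :=
  pathProb d x n fun g => g (Fin.last n) = y

/-- The Green's function `g(x,y) = ∑_{n ≥ 0} P_x[X_n = y]`. -/
noncomputable def green (d : ℕ) (x y : Fin d → ℤ) : ℝ :=
  ∑' n : ℕ, heatKernel d n x y

/-- Probability that SRW from `x` visits `A₁` at some time and `A₂` at some
(weakly) later time. -/
noncomputable def hitThenProb (d : ℕ) (A₁ A₂ : Set (Fin d → ℤ))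
    (x : Fin d → ℤ) : ℝ :=
  eventProb d x fun N g => ∃ i j : Fin (N + 1), i ≤ j ∧ g i ∈ A₁ ∧ g j ∈ A₂

/-- Probability that SRW from `x` visits the points `z 0, ..., z (m-1)` in that
order (at weakly increasing times). -/
noncomputable def orderedVisitProb (d : ℕ) (x : Fin d → ℤ) {m : ℕ}
    (z : Fin m → Fin d → ℤ) : ℝ :=
  eventProb d x fun N g =>
    ∃ t : Fin m → Fin (N + 1), Monotone t ∧ ∀ i, g (t i) = z i

/-!
Every probability involved is a supremum over horizons `N` of the probability of an event of the
first `N` steps, which are uniformly distributed over the `(2d)^N` sequences of unit steps. So each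
such probability is a normalised count, and the Markov property at a fixed time is the splitting
of a step sequence into a prefix and a suffix.

A last-exit decomposition gives `P_y[H_A < ∞] ≥ ∑_z g(y,z) e_A(z)`, hence
`P_y[H_A < ∞] ≥ β cap(A)` as soon as `g(y, ·) ≥ β` on `A`. Decomposing according to the time and
place of the first entrance into `A₁` and restarting the walk there gives
`P_x[H_{A₁} ≤ H_{A₂} ∘ θ < ∞] ≥ P_x[H_{A₁} < ∞] · inf_{y ∈ A₁} P_y[H_{A₂} < ∞]`.
Both bounds are used with `β = c₀ R^{2-d}`.
-/

open Filter Topology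

namespace SimpleRandomWalk

variable {d : ℕ}

def Step (d : ℕ) : Type := {v : Fin d → ℤ // latZ v 0 = 1}

lemma latZ_single_zero (i : Fin d) (a : ℤ) : latZ (Pi.single i a) 0 = |a| := by
  classical
  simp [latZ, Pi.single_apply, apply_ite]

lemma exists_eq_single_of_latZ_eq_one {v : Fin d → ℤ} (hv : latZ v 0 = 1) :
    ∃ i, ∃ u : ℤˣ, v = Pi.single i (u : ℤ) := by
  classical
  have hsum : ∑ j, |v j| = 1 := by simpa [latZ] using hv
  obtain ⟨i, hi⟩ : ∃ i, v i ≠ 0 := by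
    by_contra! h
    simp [h] at hsum
  have hvi : |v i| = 1 := le_antisymm (hsum ▸ Finset.single_le_sum
    (fun j _ => abs_nonneg (v j)) (Finset.mem_univ i)) (Int.one_le_abs hi)
  have hrest := Finset.add_sum_erase Finset.univ (fun j => |v j|) (Finset.mem_univ i)
  have hzero : ∀ j ≠ i, v j = 0 := fun j hj => abs_eq_zero.mp <|
    (Finset.sum_eq_zero_iff_of_nonneg fun k _ => abs_nonneg (v k)).mp (by linarith) j
      (Finset.mem_erase.mpr ⟨hj, Finset.mem_univ j⟩)
  refine ⟨i, (Int.isUnit_iff_abs_eq.mpr hvi).unit, funext fun j => ?_⟩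
  rcases eq_or_ne j i with rfl | hj
  · simp
  · simp [hj, hzero j hj]

def unitStep (p : Fin d × ℤˣ) : Step d :=
  ⟨Pi.single p.1 (p.2 : ℤ), by
    rcases Int.units_eq_one_or p.2 with h | h <;> simp [latZ_single_zero, h]⟩

lemma unitStep_bijective : Function.Bijective (unitStep (d := d)) := by
  classical
  refine ⟨fun ⟨i, u⟩ ⟨j, w⟩ h => ?_, fun ⟨v, hv⟩ => ?_⟩
  · have h := congrArg Subtype.val h
    simp only [unitStep] at h
    obtain rfl : i = j := by
      by_contra hij
      simpa [hij] using congrFun h i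
    exact Prod.ext rfl (Units.val_injective (by simpa using congrFun h i))
  · obtain ⟨i, u, rfl⟩ := exists_eq_single_of_latZ_eq_one hv
    exact ⟨(i, u), rfl⟩

noncomputable instance : Fintype (Step d) := Fintype.ofBijective _ unitStep_bijective

lemma card_step : Fintype.card (Step d) = 2 * d := by
  rw [← Fintype.card_of_bijective unitStep_bijective, Fintype.card_prod, Fintype.card_fin,
    Fintype.card_units_int, mul_comm]

variable {N : ℕ}

def stepVec (s : Fin N → Step d) (i : ℕ) : Fin d → ℤ :=
  if h : i < N then (s ⟨i, h⟩).1 else 0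

def walk (x : Fin d → ℤ) (s : Fin N → Step d) (k : ℕ) : Fin d → ℤ :=
  x + ∑ i ∈ Finset.range k, stepVec s i

@[simp] lemma walk_zero (x : Fin d → ℤ) (s : Fin N → Step d) : walk x s 0 = x := by
  simp [walk]

lemma walk_succ (x : Fin d → ℤ) (s : Fin N → Step d) (i : Fin N) :
    walk x s (i + 1) = walk x s i + (s i).1 := by
  simp [walk, Finset.sum_range_succ, stepVec, add_assoc]

section Append

variable {a b : ℕ} (s₁ : Fin a → Step d) (s₂ : Fin b → Step d)

lemma stepVec_append_of_lt {i : ℕ} (hi : i < a) :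
    stepVec (Fin.append s₁ s₂) i = stepVec s₁ i := by
  simp [stepVec, hi, show i < a + b by omega, Fin.append, Fin.addCases]

lemma stepVec_append_add (u : ℕ) : stepVec (Fin.append s₁ s₂) (a + u) = stepVec s₂ u := by
  simp [stepVec, Fin.append, Fin.addCases]

lemma walk_append_of_le (x : Fin d → ℤ) {k : ℕ} (hk : k ≤ a) :
    walk x (Fin.append s₁ s₂) k = walk x s₁ k := by
  unfold walk
  congr 1
  exact Finset.sum_congr rfl fun i hi =>
    stepVec_append_of_lt s₁ s₂ (by rw [Finset.mem_range] at hi; omega)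

lemma walk_append_add (x : Fin d → ℤ) (u : ℕ) :
    walk x (Fin.append s₁ s₂) (a + u) = walk (walk x s₁ a) s₂ u := by
  have hstart := walk_append_of_le s₁ s₂ x le_rfl
  unfold walk at hstart ⊢
  rw [Finset.sum_range_add, ← add_assoc, hstart]
  simp only [stepVec_append_add]

end Append

open Classical in
/-- `P` is evaluated on the whole path `walk x s : ℕ → ℤ^d`, which is constant after time `N`. -/
noncomputable def walkProb (d N : ℕ) (x : Fin d → ℤ) (P : (ℕ → Fin d → ℤ) → Prop) : ℝ :=
  (Finset.univ.filter fun s : Fin N → Step d => P (walk x s)).card / (2 * d : ℝ) ^ N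

def DependsUpTo {α : Type*} (m : ℕ) (P : (ℕ → α) → Prop) : Prop :=
  ∀ p q : ℕ → α, (∀ k ≤ m, p k = q k) → P p → P q

section WalkProb

variable {x : Fin d → ℤ} {P Q : (ℕ → Fin d → ℤ) → Prop}

lemma walkProb_nonneg : 0 ≤ walkProb d N x P := by
  unfold walkProb; positivity

lemma walkProb_mono (h : ∀ p, P p → Q p) : walkProb d N x P ≤ walkProb d N x Q := by
  classical
  unfold walkProb
  gcongr
  exact h _

lemma walkProb_true (hd : 0 < d) : walkProb d N x (fun _ => True) = 1 := by
  classical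
  have : (0 : ℝ) < 2 * d := by positivity
  simp [walkProb, card_step, this.ne']

lemma walkProb_le_one (hd : 0 < d) : walkProb d N x P ≤ 1 :=
  walkProb_true (N := N) (x := x) hd ▸ walkProb_mono fun _ _ => trivial

lemma walkProb_not (hd : 0 < d) : walkProb d N x (fun p => ¬ P p) = 1 - walkProb d N x P := by
  classical
  rw [← walkProb_true (N := N) (x := x) hd, eq_sub_iff_add_eq]
  simp only [walkProb, ← add_div, ← Nat.cast_add, Finset.filter_true]
  rw [add_comm, Finset.card_filter_add_card_filter_not]

lemma walkProb_le_sum {ι : Type*} (I : Finset ι) (E : ι → (ℕ → Fin d → ℤ) → Prop)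
    (hcover : ∀ p, P p → ∃ i ∈ I, E i p) :
    walkProb d N x P ≤ ∑ i ∈ I, walkProb d N x (E i) := by
  classical
  simp only [walkProb, ← Finset.sum_div]
  gcongr
  rw [← Nat.cast_sum, Nat.cast_le]
  refine (Finset.card_le_card fun s hs => ?_).trans Finset.card_biUnion_le
  obtain ⟨i, hi, hE⟩ := hcover _ (Finset.mem_filter.mp hs).2
  exact Finset.mem_biUnion.mpr ⟨i, hi, Finset.mem_filter.mpr ⟨Finset.mem_univ s, hE⟩⟩

lemma sum_walkProb_le {ι : Type*} (I : Finset ι) (E : ι → (ℕ → Fin d → ℤ) → Prop)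
    (hdisj : ∀ p, ∀ i ∈ I, ∀ j ∈ I, E i p → E j p → i = j) (hsub : ∀ i ∈ I, ∀ p, E i p → P p) :
    ∑ i ∈ I, walkProb d N x (E i) ≤ walkProb d N x P := by
  classical
  simp only [walkProb, ← Finset.sum_div]
  gcongr
  have hpd : (I : Set ι).PairwiseDisjoint fun i =>
      Finset.univ.filter fun s : Fin N → Step d => E i (walk x s) := by
    intro i hi j hj hij
    exact Finset.disjoint_filter.mpr fun s _ hEi hEj => hij (hdisj _ i hi j hj hEi hEj)
  rw [← Nat.cast_sum, Nat.cast_le, ← Finset.card_biUnion hpd]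
  refine Finset.card_le_card fun s hs => ?_
  obtain ⟨i, hi, hs⟩ := Finset.mem_biUnion.mp hs
  exact Finset.mem_filter.mpr ⟨Finset.mem_univ s, hsub i hi _ (Finset.mem_filter.mp hs).2⟩

open Classical in
lemma walkProb_append {a b : ℕ} {P₁ P₂ : (ℕ → Fin d → ℤ) → Prop} (hP₁ : DependsUpTo a P₁) :
    walkProb d (a + b) x (fun p => P₁ p ∧ P₂ (fun u => p (a + u))) =
      ∑ s₁ ∈ Finset.univ.filter (fun s₁ : Fin a → Step d => P₁ (walk x s₁)),
        walkProb d b (walk x s₁ a) P₂ / (2 * d) ^ a := by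
  have hiff : ∀ (s₁ : Fin a → Step d) (s₂ : Fin b → Step d),
      (P₁ (walk x (Fin.append s₁ s₂)) ∧ P₂ (fun u => walk x (Fin.append s₁ s₂) (a + u))) ↔
        P₁ (walk x s₁) ∧ P₂ (walk (walk x s₁ a) s₂) := fun s₁ s₂ => by
    have hpre : ∀ k ≤ a, walk x (Fin.append s₁ s₂) k = walk x s₁ k :=
      fun k hk => walk_append_of_le s₁ s₂ x hk
    simp only [walk_append_add]
    exact and_congr ⟨hP₁ _ _ hpre, hP₁ _ _ fun k hk => (hpre k hk).symm⟩ Iff.rfl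
  have hcard : (Finset.univ.filter fun s : Fin (a + b) → Step d =>
        P₁ (walk x s) ∧ P₂ (fun u => walk x s (a + u))).card =
      ∑ s₁ ∈ Finset.univ.filter (fun s₁ : Fin a → Step d => P₁ (walk x s₁)),
        (Finset.univ.filter fun s₂ : Fin b → Step d => P₂ (walk (walk x s₁ a) s₂)).card := by
    rw [Finset.card_filter, ← (Fin.appendEquiv a b).sum_comp, Fintype.sum_prod_type,
      Finset.sum_filter]
    refine Finset.sum_congr rfl fun s₁ _ => ?_
    refine (Finset.sum_congr rfl fun s₂ _ => if_congr (hiff s₁ s₂) rfl rfl).trans ?_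
    simp only [ite_and, Finset.card_filter]
    split_ifs <;> simp
  simp only [walkProb, hcard, Nat.cast_sum, Finset.sum_div, pow_add, div_div, mul_comm]

lemma walkProb_add_of_dependsUpTo (hd : 0 < d) {m M : ℕ} (hP : DependsUpTo m P) :
    walkProb d (m + M) x P = walkProb d m x P := by
  have h := walkProb_append (x := x) (b := M) (P₂ := fun _ => True) hP
  simp only [and_true, walkProb_true hd, Finset.sum_const, nsmul_eq_mul] at h
  rw [h, walkProb, one_div, div_eq_mul_inv]

lemma walkProb_of_le (hd : 0 < d) {m : ℕ} (hP : DependsUpTo m P) (hmN : m ≤ N) :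
    walkProb d N x P = walkProb d m x P := by
  obtain ⟨M, rfl⟩ := Nat.exists_eq_add_of_le hmN
  exact walkProb_add_of_dependsUpTo hd hP

lemma walkProb_mul_le_walkProb_append {a b : ℕ} {P₁ P₂ : (ℕ → Fin d → ℤ) → Prop} {c : ℝ}
    (hP₁ : DependsUpTo a P₁)
    (hc : ∀ s₁ : Fin a → Step d, P₁ (walk x s₁) → c ≤ walkProb d b (walk x s₁ a) P₂) :
    walkProb d a x P₁ * c ≤ walkProb d (a + b) x (fun p => P₁ p ∧ P₂ (fun u => p (a + u))) := by
  classical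
  rw [walkProb_append hP₁]
  calc walkProb d a x P₁ * c
      = ∑ s₁ ∈ Finset.univ.filter (fun s₁ : Fin a → Step d => P₁ (walk x s₁)),
          c / (2 * d) ^ a := by
        rw [Finset.sum_const, nsmul_eq_mul, walkProb]; ring
    _ ≤ _ := Finset.sum_le_sum fun s₁ hs₁ =>
        div_le_div_of_nonneg_right (hc s₁ (Finset.mem_filter.mp hs₁).2) (by positivity)

end WalkProb

section PathProb

variable (x : Fin d → ℤ)

lemma latZ_sub_zero (y z : Fin d → ℤ) : latZ (y - z) 0 = latZ z y := by
  simp [latZ, abs_sub_comm]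

lemma cons_walk (s : Fin N → Step d) :
    Fin.cons x (fun i : Fin N => walk x s (i + 1)) = fun j : Fin (N + 1) => walk x s j := by
  funext j
  cases j using Fin.cases <;> simp

lemma goodPath_walk (s : Fin N → Step d) : goodPath fun j : Fin (N + 1) => walk x s j := by
  intro i
  rw [← latZ_sub_zero]
  simpa only [Fin.val_succ, Fin.val_castSucc, walk_succ, add_sub_cancel_left] using (s i).2

lemma walk_succ_injective :
    Function.Injective fun (s : Fin N → Step d) (i : Fin N) => walk x s (i + 1) := by
  intro s s' (h : (fun i : Fin N => walk x s (i + 1)) = fun i : Fin N => walk x s' (i + 1))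
  have hwalk : ∀ j : Fin (N + 1), walk x s j = walk x s' j := fun j => by
    cases j using Fin.cases with
    | zero => simp
    | succ i => simpa using congrFun h i
  funext i
  apply Subtype.ext
  have hsucc := hwalk i.succ
  rw [Fin.val_succ, walk_succ, walk_succ, ← Fin.val_castSucc, hwalk i.castSucc] at hsucc
  exact add_left_cancel hsucc

lemma exists_walk_succ_eq {f : Fin N → Fin d → ℤ} (hf : goodPath (Fin.cons x f)) :
    ∃ s : Fin N → Step d, (fun i : Fin N => walk x s (i + 1)) = f := by
  set g : Fin (N + 1) → Fin d → ℤ := Fin.cons x f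
  let s : Fin N → Step d := fun i => ⟨g i.succ - g i.castSucc, by rw [latZ_sub_zero]; exact hf i⟩
  have hwalk : ∀ j : Fin (N + 1), walk x s j = g j := fun j => by
    induction j using Fin.induction with
    | zero => simp [g]
    | succ i ih =>
      rw [Fin.val_succ, walk_succ, ← Fin.val_castSucc, ih, add_sub_cancel]
  exact ⟨s, funext fun i => by simpa [g] using hwalk i.succ⟩

lemma pathProb_eq_walkProb (E : (Fin (N + 1) → Fin d → ℤ) → Prop) :
    pathProb d x N E = walkProb d N x (fun p => E fun j => p j) := by
  classical
  set F : (Fin N → Fin d → ℤ) → ℝ := fun f =>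
    if goodPath (Fin.cons x f) ∧ E (Fin.cons x f) then ((2 * d : ℝ))⁻¹ ^ N else 0
  have hsupp : Function.support F ⊆ Set.range fun (s : Fin N → Step d) (i : Fin N) =>
      walk x s (i + 1) := fun f hf => exists_walk_succ_eq x (Function.mem_support.mp hf |>
        fun h => (ite_ne_right_iff.mp h).1.1)
  rw [pathProb, ← (walk_succ_injective x).tsum_eq hsupp, tsum_fintype]
  simp only [F, cons_walk, goodPath_walk, true_and, Finset.sum_ite, Finset.sum_const_zero,
    add_zero, Finset.sum_const, nsmul_eq_mul, walkProb, inv_pow, div_eq_mul_inv]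

end PathProb

section Events

variable {α : Type*}

def hitsBy (A : Set α) (K : ℕ) (p : ℕ → α) : Prop := ∃ k ≤ K, p k ∈ A

def returnsBy (A : Set α) (K : ℕ) (p : ℕ → α) : Prop := ∃ k, 0 < k ∧ k ≤ K ∧ p k ∈ A

def hitsThenBy (A₁ A₂ : Set α) (K : ℕ) (p : ℕ → α) : Prop :=
  ∃ m n, m ≤ n ∧ n ≤ K ∧ p m ∈ A₁ ∧ p n ∈ A₂

def firstHitAt (A : Set α) (m : ℕ) (y : α) (p : ℕ → α) : Prop := p m = y ∧ ∀ k < m, p k ∉ A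

lemma dependsUpTo_eval (n : ℕ) (z : α) : DependsUpTo n (fun p => p n = z) :=
  fun _ _ h hp => (h n le_rfl).symm.trans hp

lemma dependsUpTo_hitsBy (A : Set α) (K : ℕ) : DependsUpTo K (hitsBy A K) :=
  fun _ _ h ⟨k, hk, hkA⟩ => ⟨k, hk, h k hk ▸ hkA⟩

lemma dependsUpTo_firstHitAt (A : Set α) (m : ℕ) (y : α) : DependsUpTo m (firstHitAt A m y) :=
  fun _ _ h ⟨hm, hbefore⟩ => ⟨h m le_rfl ▸ hm, fun k hk => h k hk.le ▸ hbefore k hk⟩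

lemma hitsBy_mono (A : Set α) {K K' : ℕ} (hK : K ≤ K') (p : ℕ → α) (h : hitsBy A K p) :
    hitsBy A K' p :=
  let ⟨k, hk, hkA⟩ := h; ⟨k, hk.trans hK, hkA⟩

lemma firstHitAt_unique {A : Set α} {m m' : ℕ} {y y' : α} {p : ℕ → α}
    (h : firstHitAt A m y p) (h' : firstHitAt A m' y' p) (hy : y ∈ A) (hy' : y' ∈ A) :
    (m, y) = (m', y') := by
  obtain ⟨rfl, hbefore⟩ := h
  obtain ⟨rfl, hbefore'⟩ := h'
  rcases lt_trichotomy m m' with hlt | rfl | hlt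
  · exact absurd hy (hbefore' m hlt)
  · rfl
  · exact absurd hy' (hbefore m' hlt)

lemma exists_firstHitAt {A : Set α} {K : ℕ} {p : ℕ → α} (h : hitsBy A K p) :
    ∃ m ≤ K, p m ∈ A ∧ firstHitAt A m (p m) p := by
  classical
  refine ⟨Nat.find h, (Nat.find_spec h).1, (Nat.find_spec h).2, rfl, fun k hk hkA => ?_⟩
  exact Nat.find_min h hk ⟨hk.le.trans (Nat.find_spec h).1, hkA⟩

end Events

section Probabilities

variable {x : Fin d → ℤ}

lemma eventProb_eq_iSup (E : ∀ N : ℕ, (Fin (N + 1) → Fin d → ℤ) → Prop)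
    (P : ℕ → (ℕ → Fin d → ℤ) → Prop) (hEP : ∀ N p, E N (fun j => p j) ↔ P N p) :
    eventProb d x E = ⨆ N, walkProb d N x (P N) := by
  simp only [eventProb, pathProb_eq_walkProb, hEP]

lemma hitProb_eq_iSup (A : Set (Fin d → ℤ)) :
    hitProb d A x = ⨆ N, walkProb d N x (hitsBy A N) :=
  eventProb_eq_iSup _ _ fun _ _ => ⟨fun ⟨j, hj⟩ => ⟨j, Nat.lt_succ_iff.mp j.2, hj⟩,
    fun ⟨k, hk, hkA⟩ => ⟨⟨k, Nat.lt_succ_of_le hk⟩, hkA⟩⟩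

lemma returnProb_eq_iSup (A : Set (Fin d → ℤ)) :
    returnProb d A x = ⨆ N, walkProb d N x (returnsBy A N) :=
  eventProb_eq_iSup _ _ fun _ _ =>
    ⟨fun ⟨j, hj0, hj⟩ => ⟨j, Fin.pos_iff_ne_zero.mpr hj0, Nat.lt_succ_iff.mp j.2, hj⟩,
      fun ⟨k, hk0, hk, hkA⟩ => ⟨⟨k, Nat.lt_succ_of_le hk⟩, Fin.pos_iff_ne_zero.mp hk0, hkA⟩⟩

lemma hitThenProb_eq_iSup (A₁ A₂ : Set (Fin d → ℤ)) :
    hitThenProb d A₁ A₂ x = ⨆ N, walkProb d N x (hitsThenBy A₁ A₂ N) :=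
  eventProb_eq_iSup _ _ fun _ _ =>
    ⟨fun ⟨i, j, hij, hi, hj⟩ => ⟨i, j, hij, Nat.lt_succ_iff.mp j.2, hi, hj⟩,
      fun ⟨m, n, hmn, hn, hm, hn'⟩ =>
        ⟨⟨m, Nat.lt_succ_of_le (hmn.trans hn)⟩, ⟨n, Nat.lt_succ_of_le hn⟩, hmn, hm, hn'⟩⟩

lemma heatKernel_eq_walkProb (n : ℕ) (z : Fin d → ℤ) :
    heatKernel d n x z = walkProb d n x (fun p => p n = z) := by
  rw [heatKernel, pathProb_eq_walkProb]
  rfl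

lemma bddAbove_range_walkProb (hd : 0 < d) (P : ℕ → (ℕ → Fin d → ℤ) → Prop) :
    BddAbove (Set.range fun N => walkProb d N x (P N)) :=
  ⟨1, Set.forall_mem_range.mpr fun _ => walkProb_le_one hd⟩

lemma walkProb_le_hitProb (hd : 0 < d) (A : Set (Fin d → ℤ)) (N : ℕ) :
    walkProb d N x (hitsBy A N) ≤ hitProb d A x :=
  hitProb_eq_iSup A ▸ le_ciSup (bddAbove_range_walkProb hd _) N

lemma walkProb_le_returnProb (hd : 0 < d) (A : Set (Fin d → ℤ)) (N : ℕ) :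
    walkProb d N x (returnsBy A N) ≤ returnProb d A x :=
  returnProb_eq_iSup A ▸ le_ciSup (bddAbove_range_walkProb hd _) N

lemma walkProb_le_hitThenProb (hd : 0 < d) (A₁ A₂ : Set (Fin d → ℤ)) (N : ℕ) :
    walkProb d N x (hitsThenBy A₁ A₂ N) ≤ hitThenProb d A₁ A₂ x :=
  hitThenProb_eq_iSup A₁ A₂ ▸ le_ciSup (bddAbove_range_walkProb hd _) N

lemma hitThenProb_nonneg (A₁ A₂ : Set (Fin d → ℤ)) : 0 ≤ hitThenProb d A₁ A₂ x :=
  hitThenProb_eq_iSup A₁ A₂ ▸ Real.iSup_nonneg fun _ => walkProb_nonneg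

lemma eqMeasure_nonneg (hd : 0 < d) (A : Set (Fin d → ℤ)) : 0 ≤ eqMeasure d A x := by
  classical
  unfold eqMeasure
  split_ifs
  · rw [returnProb_eq_iSup, sub_nonneg]
    exact ciSup_le fun _ => walkProb_le_one hd
  · rfl

lemma tendsto_walkProb_hitsBy (hd : 0 < d) (A : Set (Fin d → ℤ)) :
    Tendsto (fun K => walkProb d K x (hitsBy A K)) atTop (𝓝 (hitProb d A x)) := by
  refine hitProb_eq_iSup A ▸ tendsto_atTop_ciSup (fun K K' hK => ?_) (bddAbove_range_walkProb hd _)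
  rw [← walkProb_of_le hd (dependsUpTo_hitsBy A K) hK]
  exact walkProb_mono (hitsBy_mono A hK)

end Probabilities

section Capacity

variable (hd : 0 < d) (A : Finset (Fin d → ℤ)) (y : Fin d → ℤ)
include hd

lemma heatKernel_mul_eqMeasure_le {n K : ℕ} (hn : n < K) {z : Fin d → ℤ} (hz : z ∈ A) :
    heatKernel d n y z * eqMeasure d A z ≤ walkProb d K y
      (fun p => p n = z ∧ ¬ returnsBy (A : Set (Fin d → ℤ)) (K - n) (fun u => p (n + u))) := by
  have havoid : ∀ v, 1 - returnProb d A v ≤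
      walkProb d (K - n) v (fun q => ¬ returnsBy (A : Set (Fin d → ℤ)) (K - n) q) := fun v => by
    rw [walkProb_not hd]
    exact sub_le_sub_left (walkProb_le_returnProb hd _ _) 1
  calc heatKernel d n y z * eqMeasure d A z
      ≤ walkProb d (n + (K - n)) y
          (fun p => p n = z ∧ ¬ returnsBy (A : Set (Fin d → ℤ)) (K - n) (fun u => p (n + u))) := by
        rw [heatKernel_eq_walkProb, eqMeasure, if_pos (Finset.mem_coe.mpr hz)]
        refine walkProb_mul_le_walkProb_append (dependsUpTo_eval n z)
          (P₂ := fun q => ¬ returnsBy (A : Set (Fin d → ℤ)) (K - n) q) fun s₁ hs₁ => ?_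
        rw [hs₁]
        exact havoid z
    _ = _ := by rw [Nat.add_sub_cancel' hn.le]

lemma sum_heatKernel_mul_eqMeasure_le (K : ℕ) :
    ∑ z ∈ A, (∑ n ∈ Finset.range K, heatKernel d n y z) * eqMeasure d A z ≤
      walkProb d K y (hitsBy (A : Set (Fin d → ℤ)) K) := by
  -- `E (n, z)`: the last visit to `A` up to time `K` is at time `n`, at `z`
  set E : ℕ × (Fin d → ℤ) → (ℕ → Fin d → ℤ) → Prop := fun nz p =>
    p nz.1 = nz.2 ∧ ¬ returnsBy (A : Set (Fin d → ℤ)) (K - nz.1) (fun u => p (nz.1 + u))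
  have hdisj : ∀ p, ∀ nz ∈ Finset.range K ×ˢ A, ∀ nz' ∈ Finset.range K ×ˢ A,
      E nz p → E nz' p → nz = nz' := by
    rintro p ⟨n, z⟩ hnz ⟨n', z'⟩ hnz' ⟨hz, hafter⟩ ⟨hz', hafter'⟩
    dsimp only at hz hz' hafter hafter'
    subst hz hz'
    simp only [Finset.mem_product, Finset.mem_range] at hnz hnz'
    rcases lt_trichotomy n n' with hlt | rfl | hlt
    · exact absurd ⟨n' - n, by omega, by omega, by simpa [Nat.add_sub_cancel' hlt.le] using hnz'.2⟩
        hafter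
    · rfl
    · exact absurd ⟨n - n', by omega, by omega, by simpa [Nat.add_sub_cancel' hlt.le] using hnz.2⟩
        hafter'
  have hsub : ∀ nz ∈ Finset.range K ×ˢ A, ∀ p, E nz p → hitsBy (A : Set (Fin d → ℤ)) K p := by
    rintro ⟨n, z⟩ hnz p ⟨hz, -⟩
    simp only [Finset.mem_product, Finset.mem_range] at hnz
    exact ⟨n, hnz.1.le, hz ▸ hnz.2⟩
  calc ∑ z ∈ A, (∑ n ∈ Finset.range K, heatKernel d n y z) * eqMeasure d A z
      = ∑ nz ∈ Finset.range K ×ˢ A, heatKernel d nz.1 y nz.2 * eqMeasure d A nz.2 := by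
        rw [Finset.sum_product_right]
        simp only [Finset.sum_mul]
    _ ≤ ∑ nz ∈ Finset.range K ×ˢ A, walkProb d K y (E nz) := Finset.sum_le_sum fun nz hnz => by
        simp only [Finset.mem_product, Finset.mem_range] at hnz
        exact heatKernel_mul_eqMeasure_le hd A y hnz.1 hnz.2
    _ ≤ walkProb d K y (hitsBy (A : Set (Fin d → ℤ)) K) := sum_walkProb_le _ E hdisj hsub

lemma capacity_nonneg : 0 ≤ capacity d A :=
  Finset.sum_nonneg fun _ _ => eqMeasure_nonneg hd _

lemma sum_green_mul_eqMeasure_le_hitProb (hsum : ∀ z ∈ A, Summable fun n => heatKernel d n y z) :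
    ∑ z ∈ A, green d y z * eqMeasure d A z ≤ hitProb d A y :=
  le_of_tendsto' (tendsto_finsetSum _ fun z hz => (hsum z hz).hasSum.tendsto_sum_nat.mul_const _)
    fun K => (sum_heatKernel_mul_eqMeasure_le hd A y K).trans (walkProb_le_hitProb hd _ K)

lemma mul_capacity_le_hitProb {β : ℝ} (hβ : 0 < β) (hg : ∀ z ∈ A, β ≤ green d y z) :
    β * capacity d A ≤ hitProb d A y := by
  -- a non-summable `tsum` is `0`, so `β ≤ green d y z` forces summability
  have hsum : ∀ z ∈ A, Summable fun n => heatKernel d n y z := fun z hz => by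
    by_contra hns
    have := hg z hz
    rw [green, tsum_eq_zero_of_not_summable hns] at this
    linarith
  calc β * capacity d A = ∑ z ∈ A, β * eqMeasure d A z := Finset.mul_sum _ _ _
    _ ≤ ∑ z ∈ A, green d y z * eqMeasure d A z := Finset.sum_le_sum fun z hz =>
        mul_le_mul_of_nonneg_right (hg z hz) (eqMeasure_nonneg hd _)
    _ ≤ hitProb d A y := sum_green_mul_eqMeasure_le_hitProb hd A y hsum

end Capacity

section HitThen

variable (hd : 0 < d) (A₁ : Finset (Fin d → ℤ)) (A₂ : Set (Fin d → ℤ)) (x : Fin d → ℤ)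
include hd

lemma walkProb_hitsBy_le_sum_firstHitAt (K : ℕ) :
    walkProb d K x (hitsBy (A₁ : Set (Fin d → ℤ)) K) ≤
      ∑ my ∈ Finset.range (K + 1) ×ˢ A₁, walkProb d my.1 x (firstHitAt (A₁ : Set _) my.1 my.2) :=
  calc walkProb d K x (hitsBy (A₁ : Set (Fin d → ℤ)) K)
      ≤ ∑ my ∈ Finset.range (K + 1) ×ˢ A₁, walkProb d K x (firstHitAt (A₁ : Set _) my.1 my.2) :=
        walkProb_le_sum _ _ fun p hp => by
          obtain ⟨m, hm, hmA, hfirst⟩ := exists_firstHitAt hp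
          exact ⟨(m, p m), Finset.mem_product.mpr ⟨Finset.mem_range.mpr (Nat.lt_succ_of_le hm), hmA⟩,
            hfirst⟩
    _ = _ := Finset.sum_congr rfl fun my hmy => walkProb_of_le hd (dependsUpTo_firstHitAt _ _ _)
        (Nat.lt_succ_iff.mp (Finset.mem_range.mp (Finset.mem_product.mp hmy).1))

lemma walkProb_hitsBy_mul_le_hitThenProb {K : ℕ} {c : ℝ} (hc0 : 0 ≤ c)
    (hc : ∀ y ∈ A₁, c ≤ walkProb d K y (hitsBy A₂ K)) :
    walkProb d K x (hitsBy (A₁ : Set (Fin d → ℤ)) K) * c ≤ hitThenProb d A₁ A₂ x := by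
  set I := Finset.range (K + 1) ×ˢ A₁
  set E : ℕ × (Fin d → ℤ) → (ℕ → Fin d → ℤ) → Prop := fun my p =>
    firstHitAt (A₁ : Set (Fin d → ℤ)) my.1 my.2 p ∧ hitsBy A₂ K (fun u => p (my.1 + u))
  have hdep : ∀ my : ℕ × (Fin d → ℤ), DependsUpTo (my.1 + K) (E my) := by
    rintro ⟨m, y⟩ p q h ⟨hfirst, hhit⟩
    exact ⟨dependsUpTo_firstHitAt _ m y p q (fun k hk => h k (by omega)) hfirst,
      dependsUpTo_hitsBy A₂ K _ _ (fun k hk => h (m + k) (by omega)) hhit⟩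
  have hdisj : ∀ p, ∀ my ∈ I, ∀ my' ∈ I, E my p → E my' p → my = my' :=
    fun _ _ hmy _ hmy' h h' =>
      firstHitAt_unique h.1 h'.1 (Finset.mem_product.mp hmy).2 (Finset.mem_product.mp hmy').2
  have hsub : ∀ my ∈ I, ∀ p, E my p → hitsThenBy (A₁ : Set (Fin d → ℤ)) A₂ (2 * K) p := by
    rintro ⟨m, y⟩ hmy p ⟨⟨hy, -⟩, k, hk, hkA⟩
    simp only [I, Finset.mem_product, Finset.mem_range] at hmy
    exact ⟨m, m + k, by omega, by omega, hy ▸ hmy.2, hkA⟩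
  calc walkProb d K x (hitsBy (A₁ : Set (Fin d → ℤ)) K) * c
      ≤ ∑ my ∈ I, walkProb d my.1 x (firstHitAt (A₁ : Set _) my.1 my.2) * c := by
        rw [← Finset.sum_mul]
        exact mul_le_mul_of_nonneg_right (walkProb_hitsBy_le_sum_firstHitAt hd A₁ x K) hc0
    _ ≤ ∑ my ∈ I, walkProb d (2 * K) x (E my) := Finset.sum_le_sum fun my hmy => by
        simp only [I, Finset.mem_product, Finset.mem_range] at hmy
        rw [walkProb_of_le hd (hdep my) (by omega)]
        refine walkProb_mul_le_walkProb_append (dependsUpTo_firstHitAt _ _ _)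
          (P₂ := hitsBy A₂ K) fun s₁ hs₁ => ?_
        rw [hs₁.1]
        exact hc my.2 hmy.2
    _ ≤ walkProb d (2 * K) x (hitsThenBy (A₁ : Set _) A₂ (2 * K)) := sum_walkProb_le _ E hdisj hsub
    _ ≤ hitThenProb d A₁ A₂ x := walkProb_le_hitThenProb hd _ _ _

lemma hitProb_mul_le_hitThenProb {b : ℝ} (hb : 0 ≤ b) (h : ∀ y ∈ A₁, b ≤ hitProb d A₂ y) :
    hitProb d A₁ x * b ≤ hitThenProb d A₁ A₂ x := by
  rcases hb.eq_or_lt with rfl | hb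
  · simpa using hitThenProb_nonneg _ _
  -- for `c < b`, eventually every `y ∈ A₁` hits `A₂` within `K` steps with probability `≥ c`
  have hbelow : ∀ c ∈ Set.Ioo 0 b, hitProb d A₁ x * c ≤ hitThenProb d A₁ A₂ x := by
    rintro c ⟨hc0, hcb⟩
    have hev : ∀ᶠ K in atTop, ∀ y ∈ A₁, c ≤ walkProb d K y (hitsBy A₂ K) :=
      (eventually_all_finset A₁).mpr fun y hy =>
        ((tendsto_walkProb_hitsBy hd A₂).eventually (lt_mem_nhds (hcb.trans_le (h y hy)))).mono
          fun _ => le_of_lt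
    exact le_of_tendsto ((tendsto_walkProb_hitsBy hd _).mul_const c)
      (hev.mono fun K hK => walkProb_hitsBy_mul_le_hitThenProb hd A₁ A₂ x hc0.le hK)
  exact le_of_tendsto (((continuous_const_mul _).tendsto b).mono_left nhdsWithin_le_nhds)
    (eventually_of_mem (Ioo_mem_nhdsLT hb) hbelow)

end HitThen

end SimpleRandomWalk

open SimpleRandomWalk

theorem stmt_11_general (d : ℕ) (hd : 5 ≤ d) (A₁ A₂ A₃ : Finset (Fin d → ℤ))
    (c c₀ R : ℝ) (hc₀ : 0 < c₀) (hR : 0 < R)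
    (hA : ∀ y : Fin d → ℤ, (y ∈ A₁ ∨ y ∈ A₂ ∨ y ∈ A₃) → (latZ y 0 : ℝ) ≤ c * R)
    (hg : ∀ y z : Fin d → ℤ, (latZ y 0 : ℝ) ≤ c * R → (latZ z 0 : ℝ) ≤ c * R →
      c₀ * R ^ ((2 : ℝ) - d) ≤ green d y z) :
    ∀ x ∈ A₃,
      c₀ ^ 2 * R ^ (2 * ((2 : ℝ) - d)) * capacity d A₁ * capacity d A₂
        ≤ hitThenProb d (↑A₁) (↑A₂) x := by
  intro x hx
  have hd0 : 0 < d := by omega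
  set β : ℝ := c₀ * R ^ ((2 : ℝ) - d)
  have hβ : 0 < β := mul_pos hc₀ (Real.rpow_pos_of_pos hR _)
  have hβsq : c₀ ^ 2 * R ^ (2 * ((2 : ℝ) - d)) = β * β := by
    rw [mul_comm (2 : ℝ), Real.rpow_mul hR.le, Real.rpow_two]
    ring
  have hcap₁ : β * capacity d A₁ ≤ hitProb d A₁ x := mul_capacity_le_hitProb hd0 A₁ x hβ
    fun z hz => hg x z (hA x (Or.inr (Or.inr hx))) (hA z (Or.inl hz))
  have hcap₂ : ∀ y ∈ A₁, β * capacity d A₂ ≤ hitProb d A₂ y := fun y hy =>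
    mul_capacity_le_hitProb hd0 A₂ y hβ
      fun z hz => hg y z (hA y (Or.inl hy)) (hA z (Or.inr (Or.inl hz)))
  have hcap₂_nonneg : 0 ≤ β * capacity d A₂ := mul_nonneg hβ.le (capacity_nonneg hd0 A₂)
  calc c₀ ^ 2 * R ^ (2 * ((2 : ℝ) - d)) * capacity d A₁ * capacity d A₂
      = β * capacity d A₁ * (β * capacity d A₂) := by rw [hβsq]; ring
    _ ≤ hitProb d A₁ x * (β * capacity d A₂) := mul_le_mul_of_nonneg_right hcap₁ hcap₂_nonneg
    _ ≤ hitThenProb d A₁ A₂ x := hitProb_mul_le_hitThenProb hd0 A₁ A₂ x hcap₂_nonneg hcap₂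

/-- Equation (3.21) of the paper: if `A₁, A₂, A₃` are finite subsets of `ℤ^d`
contained in the ball `B(0,cR)` on which the Green's function is bounded below
by `c₀ R^{2-d}`, then for every `x ∈ A₃`, the probability that SRW started at
`x` hits `A₁` and afterwards hits `A₂` is at least
`c₀² R^{2(2-d)} cap(A₁) cap(A₂)`. -/
theorem stmt_11 (d : ℕ) (hd : 5 ≤ d) (A₁ A₂ A₃ : Finset (Fin d → ℤ))
    (c c₀ R : ℝ) (hc : 0 < c) (hc₀ : 0 < c₀) (hR : 0 < R)
    (hA : ∀ y : Fin d → ℤ, (y ∈ A₁ ∨ y ∈ A₂ ∨ y ∈ A₃) → (latZ y 0 : ℝ) ≤ c * R)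
    (hg : ∀ y z : Fin d → ℤ, (latZ y 0 : ℝ) ≤ c * R → (latZ z 0 : ℝ) ≤ c * R →
      c₀ * R ^ ((2 : ℝ) - d) ≤ green d y z) :
    ∀ x ∈ A₃,
      c₀ ^ 2 * R ^ (2 * ((2 : ℝ) - d)) * capacity d A₁ * capacity d A₂
        ≤ hitThenProb d (↑A₁) (↑A₂) x :=
  stmt_11_general d hd A₁ A₂ A₃ c c₀ R hc₀ hR hA hg
end
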